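/- Consider the three-point birth-death chain on V = {1,2,3} with edge weights w(1,2) = 10, w(2,3) = 1, w(1,3) = 0 and measure m(1) = 1/ε, m(2) = 1, m(3) = 1/20, with transition rates P(x,y) = w(x,y)/m(x). Define f_ε(1) = ε, f_ε(2) = 1, f_ε(3) = −log ε. Then as ε → 0⁺, the ratio E(f_ε, log f_ε)/Ent(f_ε) tends to 0, where E(f,g) = Σ_{x,y} w(x,y)(f(y)−f(x))(g(y)−g(x))/2 (up to normalization) and Ent is computed with respect to the normalized measure. In particular, there exist constants c, C > 0 such that for all sufficiently small ε: Ent(f_ε) ≥ c(log(1/ε))² and E(f_ε, log f_ε) ≤ C·log(1/ε)·log log(1/ε). -/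

import Mathlib

/-!
Write `L = log (1/ε)`. Then `E(f_ε, log f_ε) = 10 (1 - ε) L + (L - 1) log L = O(L log L)`.
The mass of `f_ε` is `M = 2 + L/20` while `m(V) ≥ 1/ε`, so the normalization term
`-M log (M / m(V))` is at least `M (L - log M)`, and `Ent(f_ε) ≥ (19/400) L² + (17/20) L - 2`.
The ratio is then squeezed between `0` and a multiple of `log L / L → 0`.
-/

open Finset Real

/-- Symmetric edge weights of the three-point birth-death chain:
`w(1,2) = 10`, `w(2,3) = 1`, `w(1,3) = 0` (vertices indexed `0,1,2`). -/
noncomputable def w8 : Fin 3 → Fin 3 → ℝ := ![![0, 10, 0], ![10, 0, 1], ![0, 1, 0]]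

/-- The measure `m(1) = 1/ε`, `m(2) = 1`, `m(3) = 1/20`. -/
noncomputable def m8 (ε : ℝ) : Fin 3 → ℝ := ![1 / ε, 1, 1 / 20]

/-- The test function `f(1) = ε`, `f(2) = 1`, `f(3) = -log ε`. -/
noncomputable def f8 (ε : ℝ) : Fin 3 → ℝ := ![ε, 1, -Real.log ε]

/-- The Dirichlet form `E(f, log f) = (1/2) ∑_{x,y} w(x,y)(f(y)-f(x))(log f(y) - log f(x))`. -/
noncomputable def dirich8 (ε : ℝ) : ℝ :=
  (1 / 2) * ∑ x, ∑ y, w8 x y * (f8 ε y - f8 ε x) * (Real.log (f8 ε y) - Real.log (f8 ε x))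

/-- The (normalization-invariant) entropy
`Ent(f) = ∑_x m(x) f(x) log f(x) - (∑_x m(x) f(x)) log((∑_x m(x) f(x))/m(V))`. -/
noncomputable def ent8 (ε : ℝ) : ℝ :=
  (∑ x, m8 ε x * f8 ε x * Real.log (f8 ε x)) -
    (∑ x, m8 ε x * f8 ε x) * Real.log ((∑ x, m8 ε x * f8 ε x) / (∑ x, m8 ε x))

open Filter Topology

theorem tendsto_div_nhds_zero_of_le_mul_log {α : Type*} {F : Filter α} {D E L : α → ℝ}
    {c C : ℝ} (hc : 0 < c) (hL : Tendsto L F atTop) (hD₀ : ∀ᶠ x in F, 0 ≤ D x)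
    (hD : ∀ᶠ x in F, D x ≤ C * L x * log (L x)) (hE : ∀ᶠ x in F, c * L x ^ 2 ≤ E x) :
    Tendsto (fun x => D x / E x) F (𝓝 0) := by
  have hbound : Tendsto (fun x => C / c * (log (L x) / L x)) F (𝓝 0) := by
    simpa using (isLittleO_log_id_atTop.tendsto_div_nhds_zero.comp hL).const_mul (C / c)
  refine tendsto_of_tendsto_of_tendsto_of_le_of_le' tendsto_const_nhds hbound ?_ ?_
  · filter_upwards [hD₀, hE, hL.eventually_gt_atTop 0] with x hD₀ hE hL₀
    exact div_nonneg hD₀ ((by positivity : 0 ≤ c * L x ^ 2).trans hE)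
  · filter_upwards [hD₀, hD, hE, hL.eventually_gt_atTop 0] with x hD₀ hD hE hL₀
    calc D x / E x ≤ D x / (c * L x ^ 2) := div_le_div_of_nonneg_left hD₀ (by positivity) hE
      _ ≤ C * L x * log (L x) / (c * L x ^ 2) := by gcongr
      _ = C / c * (log (L x) / L x) := by field_simp

lemma lt_one_of_one_le_log_one_div {ε : ℝ} (hε : 0 < ε) (hL : 1 ≤ log (1 / ε)) :
    ε < 1 := by
  rw [one_div, log_inv] at hL
  exact (log_neg_iff hε).1 (by linarith)

lemma dirich8_eq (ε : ℝ) :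
    dirich8 ε = 10 * (1 - ε) * log (1 / ε) + (log (1 / ε) - 1) * log (log (1 / ε)) := by
  simp only [dirich8, w8, f8, Fin.sum_univ_three, Matrix.cons_val, one_div, log_inv, log_neg_eq_log,
    log_one]
  ring

lemma dirich8_nonneg {ε : ℝ} (hε : 0 < ε) (hL : 1 ≤ log (1 / ε)) : 0 ≤ dirich8 ε := by
  have : 0 ≤ 1 - ε := by linarith [lt_one_of_one_le_log_one_div hε hL]
  have : 0 ≤ log (log (1 / ε)) := log_nonneg hL
  have : 0 ≤ log (1 / ε) - 1 := by linarith
  rw [dirich8_eq]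
  positivity

lemma dirich8_le {ε : ℝ} (hε : 0 < ε) (hL : exp 1 ≤ log (1 / ε)) :
    dirich8 ε ≤ 11 * log (1 / ε) * log (log (1 / ε)) := by
  set L := log (1 / ε)
  have hL₀ : 0 < L := (exp_pos 1).trans_le hL
  have hlogL : 1 ≤ log L := by simpa using log_le_log (exp_pos 1) hL
  rw [dirich8_eq]
  nlinarith [mul_le_mul_of_nonneg_left hlogL hL₀.le, mul_nonneg hε.le hL₀.le]

lemma ent8_eq {ε : ℝ} (hε : 0 < ε) :
    ent8 ε = -log (1 / ε) + log (1 / ε) / 20 * log (log (1 / ε)) -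
      (2 + log (1 / ε) / 20) * log ((2 + log (1 / ε) / 20) / (1 / ε + 21 / 20)) := by
  simp only [ent8, m8, f8, Fin.sum_univ_three, Matrix.cons_val, one_div, log_inv, log_neg_eq_log,
    log_one, inv_mul_cancel₀ hε.ne']
  ring_nf

lemma le_ent8 {ε : ℝ} (hε : 0 < ε) (hL : 1 ≤ log (1 / ε)) :
    19 / 400 * log (1 / ε) ^ 2 + 17 / 20 * log (1 / ε) - 2 ≤ ent8 ε := by
  rw [ent8_eq hε]
  set L := log (1 / ε) with hL_def
  set M := 2 + L / 20 with hM_def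
  have hM : 0 < M := by positivity
  have hnorm : log (M / (1 / ε + 21 / 20)) ≤ M - 1 - L := by
    calc log (M / (1 / ε + 21 / 20)) ≤ log (M * ε) := by
          gcongr
          rw [div_le_iff₀ (by positivity), mul_assoc, mul_add, mul_one_div_cancel hε.ne']
          nlinarith [mul_pos hM hε]
      _ = log M - L := by rw [log_mul hM.ne' hε.ne', hL_def, one_div, log_inv]; ring
      _ ≤ M - 1 - L := by linarith [log_le_sub_one_of_pos hM]
  have hlogL : 0 ≤ log L := log_nonneg hL
  nlinarith [mul_le_mul_of_nonneg_left hnorm hM.le, mul_nonneg (by linarith : 0 ≤ L) hlogL]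

/-- On the three-point chain, `E(f_ε, log f_ε)/Ent(f_ε) → 0` as `ε → 0⁺`; in particular
there are `c, C > 0` with `Ent(f_ε) ≥ c (log(1/ε))²` and
`E(f_ε, log f_ε) ≤ C log(1/ε) log log(1/ε)` for all sufficiently small `ε > 0`. -/
theorem three_point_mls_counterexample :
    Filter.Tendsto (fun ε => dirich8 ε / ent8 ε) (nhdsWithin 0 (Set.Ioi 0)) (nhds 0) ∧
    ∃ c C : ℝ, 0 < c ∧ 0 < C ∧ ∀ᶠ ε in nhdsWithin 0 (Set.Ioi 0),
      c * (Real.log (1 / ε)) ^ 2 ≤ ent8 ε ∧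
      dirich8 ε ≤ C * Real.log (1 / ε) * Real.log (Real.log (1 / ε)) := by
  have hL : Tendsto (fun ε : ℝ => log (1 / ε)) (𝓝[>] 0) atTop :=
    (tendsto_log_atTop.comp tendsto_inv_nhdsGT_zero).congr fun ε => by simp
  have hpos : ∀ᶠ ε in 𝓝[>] (0 : ℝ), 0 < ε := self_mem_nhdsWithin
  have hent : ∀ᶠ ε in 𝓝[>] (0 : ℝ), 19 / 400 * log (1 / ε) ^ 2 ≤ ent8 ε := by
    filter_upwards [hpos, hL.eventually_ge_atTop (40 / 17)] with ε hε hL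
    linarith [le_ent8 hε (by linarith)]
  have hdirich₀ : ∀ᶠ ε in 𝓝[>] (0 : ℝ), 0 ≤ dirich8 ε := by
    filter_upwards [hpos, hL.eventually_ge_atTop 1] with ε hε hL
    exact dirich8_nonneg hε hL
  have hdirich :
      ∀ᶠ ε in 𝓝[>] (0 : ℝ), dirich8 ε ≤ 11 * log (1 / ε) * log (log (1 / ε)) := by
    filter_upwards [hpos, hL.eventually_ge_atTop (exp 1)] with ε hε hL
    exact dirich8_le hε hL
  exact ⟨tendsto_div_nhds_zero_of_le_mul_log (by norm_num) hL hdirich₀ hdirich hent,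
    19 / 400, 11, by norm_num, by norm_num, hent.and hdirich⟩
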